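/- Let J be a graded left coideal of a connected graded Hopf algebra H with graded filtration-ordered basis (x_i) of degrees |x_i|, and let Z₀ act on L(H,A) as f ↦ f∘Y. Define Ψ_J[Z₀] to be the diagonal matrix with entries |x_i|. Then the matrix commutator satisfies [Ψ_J[f], −Ψ_J[Z₀]] = Ψ_J[f ∘ Y]; concretely, ((|x_i| − |x_j|) f(M_{ij}))_{ij} = ((f∘Y)(M_{ij}))_{ij}, which holds because each coproduct matrix entry M_{ij} is homogeneous of degree |x_i| − |x_j|. -/

import Mathlib

/-!
Split `Δ(x_i) = ∑_j M_{ij} ⊗ x_j` into bihomogeneous parts by applying `π_a ⊗ π_b`, where `π`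
are the projections onto the graded pieces. Since `Δ` preserves total degree, this kills
`Δ(x_i)` unless `a + b = |x_i|`; since the `x_j` are homogeneous and linearly independent, the
result is `∑_{|x_j| = b} π_a(M_{ij}) ⊗ x_j`, whose coefficients must then vanish. Hence `M_{ij}` is
homogeneous of degree `|x_i| - |x_j|` (and zero if that is negative), so `Y` acts on it by that
scalar, which is exactly the entrywise form of the commutator identity.
-/

open TensorProduct

theorem TensorProduct.eq_zero_of_sum_tmul_eq_zero {R M N ι : Type*} [CommRing R]
    [AddCommGroup M] [Module R M] [AddCommGroup N] [Module R N] [Module.Flat R M] [Fintype ι]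
    {x : ι → N} (hx : LinearIndependent R x) {c : ι → M} (h : ∑ i, c i ⊗ₜ[R] x i = 0) (i : ι) :
    c i = 0 := by
  classical
  set t : M ⊗[R] (ι →₀ R) := ∑ j, c j ⊗ₜ Finsupp.single j 1
  have ht : t = 0 := by
    apply Module.Flat.lTensor_preserves_injective_linearMap _ hx
    simpa [t, map_sum] using h
  simpa [t, map_sum, Finsupp.single_apply] using congr((finsuppScalarRight R R M ι $ht) i)

namespace DirectSum

section Projection

variable {ι R M : Type*} [DecidableEq ι] [CommSemiring R] [AddCommMonoid M] [Module R M]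
  (ℳ : ι → Submodule R M) [Decomposition ℳ]

def projLinear (i : ι) : M →ₗ[R] M :=
  (ℳ i).subtype ∘ₗ component R ι (fun i ↦ ℳ i) i ∘ₗ (decomposeLinearEquiv ℳ).toLinearMap

@[simp]
lemma projLinear_apply (i : ι) (x : M) : projLinear ℳ i x = decompose ℳ x i := rfl

lemma projLinear_comp_subtype_of_ne {i j : ι} (h : i ≠ j) :
    projLinear ℳ j ∘ₗ (ℳ i).subtype = 0 := by
  ext ⟨x, hx⟩
  exact decompose_of_mem_ne ℳ hx h

lemma mem_of_decompose_eq_zero {x : M} {i : ι} (h : ∀ j ≠ i, (decompose ℳ x j : M) = 0) :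
    x ∈ ℳ i := by
  have hx : decompose ℳ x = of (fun i ↦ ℳ i) i (decompose ℳ x i) := by
    ext j
    by_cases hji : j = i
    · subst hji
      simp
    · simp [of_apply, Ne.symm hji, h j hji]
  rw [← (decompose ℳ).symm_apply_apply x, hx, decompose_symm_of]
  exact Submodule.coe_mem _

end Projection

section TensorGrading

variable {ι R M N : Type*} [DecidableEq ι] [AddMonoid ι] [CommSemiring R]
  [AddCommMonoid M] [Module R M] [AddCommMonoid N] [Module R N]
  (ℳ : ι → Submodule R M) (𝒩 : ι → Submodule R N)

def tensorGrading (n : ι) : Submodule R (M ⊗[R] N) :=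
  ⨆ (p : ι) (q : ι) (_ : p + q = n), LinearMap.range (TensorProduct.mapIncl (ℳ p) (𝒩 q))

variable [Decomposition ℳ] [Decomposition 𝒩]

lemma map_projLinear_eq_zero_of_mem_tensorGrading {z : M ⊗[R] N} {n a b : ι}
    (hz : z ∈ tensorGrading ℳ 𝒩 n) (hab : a + b ≠ n) :
    TensorProduct.map (projLinear ℳ a) (projLinear 𝒩 b) z = 0 := by
  refine LinearMap.mem_ker.mp
    ((iSup_le fun p ↦ iSup_le fun q ↦ iSup_le fun hpq ↦ ?_ : tensorGrading ℳ 𝒩 n ≤ _) hz)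
  rintro _ ⟨w, rfl⟩
  rw [LinearMap.mem_ker, mapIncl, ← LinearMap.comp_apply, ← TensorProduct.map_comp]
  by_cases hpa : p = a
  · rw [projLinear_comp_subtype_of_ne 𝒩 (fun hqb : q = b ↦ hab (hpa ▸ hqb ▸ hpq)),
      map_zero_right, LinearMap.zero_apply]
  · rw [projLinear_comp_subtype_of_ne ℳ hpa, map_zero_left, LinearMap.zero_apply]

end TensorGrading

lemma decompose_coeff_eq_zero_of_sum_tmul_mem_tensorGrading {ι κ R M N : Type*} [DecidableEq ι]
    [AddMonoid ι] [CommRing R] [AddCommGroup M] [Module R M] [Module.Flat R M]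
    [AddCommGroup N] [Module R N] (ℳ : ι → Submodule R M) (𝒩 : ι → Submodule R N)
    [Decomposition ℳ] [Decomposition 𝒩] [Fintype κ] {x : κ → N} (hx : LinearIndependent R x)
    {d : κ → ι} (hd : ∀ j, x j ∈ 𝒩 (d j)) {c : κ → M} {n : ι}
    (hc : ∑ j, c j ⊗ₜ[R] x j ∈ tensorGrading ℳ 𝒩 n) {a : ι} {j : κ} (haj : a + d j ≠ n) :
    (decompose ℳ (c j) a : M) = 0 := by
  classical
  have hmap := map_projLinear_eq_zero_of_mem_tensorGrading ℳ 𝒩 hc haj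
  rw [map_sum] at hmap
  have hsum : ∑ j', (if d j' = d j then projLinear ℳ a (c j') else 0) ⊗ₜ[R] x j' = 0 := by
    rw [← hmap]
    refine Finset.sum_congr rfl fun j' _ ↦ ?_
    rw [map_tmul]
    split_ifs with hj'
    · rw [projLinear_apply 𝒩, decompose_of_mem_same 𝒩 (hj' ▸ hd j')]
    · rw [projLinear_apply 𝒩, decompose_of_mem_ne 𝒩 (hd j') hj', tmul_zero, zero_tmul]
  simpa using eq_zero_of_sum_tmul_eq_zero hx hsum j

lemma apply_eq_sub_smul_of_decompose_eq_zero {R M : Type*} [CommRing R] [AddCommGroup M]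
    [Module R M] (ℳ : ℕ → Submodule R M) [Decomposition ℳ] (Y : M →ₗ[R] M)
    (hY : ∀ n, ∀ z ∈ ℳ n, Y z = (n : R) • z) {z : M} {b c : ℕ}
    (h : ∀ a, a + b ≠ c → (decompose ℳ z a : M) = 0) :
    Y z = ((c : R) - b) • z := by
  rcases le_or_gt b c with hbc | hcb
  · rw [← Nat.cast_sub hbc]
    exact hY _ _ (mem_of_decompose_eq_zero ℳ fun a ha ↦ h a (by omega))
  · have hz : z ∈ ℳ 0 := mem_of_decompose_eq_zero ℳ fun a _ ↦ h a (by omega)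
    have hz0 : z = 0 := by
      rw [← decompose_of_mem_same ℳ hz]
      exact h 0 (by omega)
    rw [hz0, map_zero, smul_zero]

end DirectSum

theorem matrix_commutator_grading_general
    (k H A : Type*) [Field k] [CommRing H] [Bialgebra k H]
    [CommRing A] [Algebra k A]
    (ℱ : ℕ → Submodule k H)
    (hint : DirectSum.IsInternal ℱ)
    (hΔgr : ∀ n : ℕ, ∀ z ∈ ℱ n, Coalgebra.comul (R := k) z ∈
      ⨆ (p : ℕ) (q : ℕ) (_ : p + q = n),
        LinearMap.range (TensorProduct.mapIncl (ℱ p) (ℱ q)))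
    (Y : H →ₗ[k] H)
    (hY : ∀ n : ℕ, ∀ z ∈ ℱ n, Y z = (n : k) • z)
    (m : ℕ) (x : Fin m → H)
    (hind : LinearIndependent k x)
    (d : Fin m → ℕ)
    (hdeg : ∀ i : Fin m, x i ∈ ℱ (d i))
    (M : Matrix (Fin m) (Fin m) H)
    (hM : ∀ i : Fin m, Coalgebra.comul (R := k) (x i) = ∑ j, M i j ⊗ₜ[k] x j) :
    (∀ i j : Fin m, Y (M i j) = (((d i : k) - (d j : k))) • M i j) ∧
    ∀ f : H →ₗ[k] A,
      (Matrix.diagonal fun i => algebraMap k A (d i : k)) *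
          (Matrix.of fun i j => f (M i j)) -
        (Matrix.of fun i j => f (M i j)) *
          (Matrix.diagonal fun i => algebraMap k A (d i : k))
      = Matrix.of fun i j => f (Y (M i j)) := by
  let := hint.chooseDecomposition
  have hYM (i j : Fin m) : Y (M i j) = ((d i : k) - d j) • M i j :=
    DirectSum.apply_eq_sub_smul_of_decompose_eq_zero ℱ Y hY fun _ ha ↦
      DirectSum.decompose_coeff_eq_zero_of_sum_tmul_mem_tensorGrading ℱ ℱ hind hdeg
        (hM i ▸ hΔgr _ _ (hdeg i)) ha
  refine ⟨hYM, fun f ↦ ?_⟩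
  ext i j
  simp only [Matrix.sub_apply, Matrix.diagonal_mul, Matrix.mul_diagonal, Matrix.of_apply,
    hYM i j, map_smul]
  rw [Algebra.smul_def, map_sub, sub_mul, mul_comm (f (M i j))]

/-- For a graded left coideal with homogeneous filtration-ordered basis of degrees
`d i`, representing `Z₀` by the diagonal degree matrix `D`, the matrix commutator
satisfies `[Ψ_J[f], −Ψ_J[Z₀]] = Ψ_J[f ∘ Y]`, i.e. entrywise
`(d i − d j)·f(M_{ij}) = f(Y(M_{ij}))`; this holds because each coproduct matrix
entry `M_{ij}` is homogeneous of degree `d i − d j`. -/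
theorem matrix_commutator_grading
    (k H A : Type*) [Field k] [CharZero k] [CommRing H] [Bialgebra k H]
    [CommRing A] [Algebra k A]
    (ℱ : ℕ → Submodule k H)
    (hint : DirectSum.IsInternal ℱ)
    (hconn : ℱ 0 = Submodule.span k {1})
    (hΔgr : ∀ n : ℕ, ∀ z ∈ ℱ n, Coalgebra.comul (R := k) z ∈
      ⨆ (p : ℕ) (q : ℕ) (_ : p + q = n),
        LinearMap.range (TensorProduct.mapIncl (ℱ p) (ℱ q)))
    (Y : H →ₗ[k] H)
    (hY : ∀ n : ℕ, ∀ z ∈ ℱ n, Y z = (n : k) • z)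
    (m : ℕ) (x : Fin m → H)
    (hind : LinearIndependent k x)
    (d : Fin m → ℕ)
    (hdeg : ∀ i : Fin m, x i ∈ ℱ (d i))
    (horder : Monotone d)
    (M : Matrix (Fin m) (Fin m) H)
    (hM : ∀ i : Fin m, Coalgebra.comul (R := k) (x i) = ∑ j, M i j ⊗ₜ[k] x j) :
    (∀ i j : Fin m, Y (M i j) = (((d i : k) - (d j : k))) • M i j) ∧
    ∀ f : H →ₗ[k] A,
      (Matrix.diagonal fun i => algebraMap k A (d i : k)) *
          (Matrix.of fun i j => f (M i j)) -
        (Matrix.of fun i j => f (M i j)) *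
          (Matrix.diagonal fun i => algebraMap k A (d i : k))
      = Matrix.of fun i j => f (Y (M i j)) :=
  matrix_commutator_grading_general k H A ℱ hint hΔgr Y hY m x hind d hdeg M hM
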